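/- arXiv:2209.09437 — 3 statements merged into one kernel-verified Lean document; each statement's English description precedes it below -/
import Mathlib

section
/- Let W be the real symmetric (m+n)×(m+n) saddle point matrix W = [[A, B], [Bᵀ, C]], where A ∈ ℝ^{m×m} is symmetric positive definite, B ∈ ℝ^{m×n}, and C ∈ ℝ^{n×n} is symmetric negative semidefinite. If λ_min(A) + λ_min(C) ≥ 0, then W possesses the quasi-Perron-Frobenius property, i.e., the spectral radius ρ(W) is an eigenvalue of W; equivalently, ρ(W) = λ_max(W). -/
/-
Let `μ` be an eigenvalue of `W` with eigenvector `(u, v)`; put `p = uᵀu`, `q = vᵀv`, and let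
`a`, `c` be the least eigenvalues of `A` and `C`. If `p, q > 0`, the two block equations make
the Rayleigh quotient of `W` at `(q u, -p v)` equal to `uᵀAu/p + vᵀCv/q - μ ≥ a + c - μ ≥ -μ`.
If `v = 0`, then `μ` is an eigenvalue of `A`, so `-μ ≤ -a ≤ c`; symmetrically if `u = 0`.
Both `a` and `c` are bounded by a diagonal entry of `W`, hence by `λ_max(W)`. So no eigenvalue
of `W` lies below `-λ_max(W)`, that is, `ρ(W) = λ_max(W)`.
-/

open Matrix

/-- A real matrix is negative semidefinite if it is symmetric (Hermitian) and its
quadratic form is nonpositive. -/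
def Matrix.NegSemidefinite {k : Type*} [Fintype k] (M : Matrix k k ℝ) : Prop :=
  M.IsHermitian ∧ ∀ x : k → ℝ, x ⬝ᵥ (M *ᵥ x) ≤ 0

/-- The maximum eigenvalue of a real symmetric matrix. -/
noncomputable def maxEig {k : Type*} [Fintype k] [DecidableEq k]
    {M : Matrix k k ℝ} (hM : M.IsHermitian) : ℝ :=
  ⨆ i, hM.eigenvalues i

/-- The minimum eigenvalue of a real symmetric matrix. -/
noncomputable def minEig {k : Type*} [Fintype k] [DecidableEq k]
    {M : Matrix k k ℝ} (hM : M.IsHermitian) : ℝ :=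
  ⨅ i, hM.eigenvalues i

/-- The spectral radius of a real symmetric matrix: the maximum of the absolute
values of its eigenvalues. -/
noncomputable def specRad {k : Type*} [Fintype k] [DecidableEq k]
    {M : Matrix k k ℝ} (hM : M.IsHermitian) : ℝ :=
  ⨆ i, |hM.eigenvalues i|

namespace Matrix

section Rayleigh

open scoped MatrixOrder

variable {k : Type*} [Fintype k] {M N : Matrix k k ℝ}

theorem dotProduct_self_pos {x : k → ℝ} (hx : x ≠ 0) : 0 < x ⬝ᵥ x := by
  simpa using dotProduct_star_self_pos_iff.mpr hx

theorem dotProduct_mulVec_le_of_le (h : M ≤ N) (x : k → ℝ) :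
    x ⬝ᵥ (M *ᵥ x) ≤ x ⬝ᵥ (N *ᵥ x) := by
  simpa [sub_mulVec, dotProduct_sub] using (le_iff.mp h).dotProduct_mulVec_nonneg x

variable [DecidableEq k]

theorem dotProduct_algebraMap_mulVec (c : ℝ) (x : k → ℝ) :
    x ⬝ᵥ (algebraMap ℝ (Matrix k k ℝ) c *ᵥ x) = c * (x ⬝ᵥ x) := by
  simp [Algebra.algebraMap_eq_smul_one, smul_mulVec, dotProduct_smul]

theorem IsHermitian.minEig_mul_dotProduct_self_le (hM : M.IsHermitian) (x : k → ℝ) :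
    minEig hM * (x ⬝ᵥ x) ≤ x ⬝ᵥ (M *ᵥ x) := by
  refine dotProduct_algebraMap_mulVec (minEig hM) x ▸ dotProduct_mulVec_le_of_le ?_ x
  rw [algebraMap_le_iff_le_spectrum (ha := hM.isSelfAdjoint),
    hM.spectrum_real_eq_range_eigenvalues]
  rintro _ ⟨i, rfl⟩
  exact ciInf_le (Finite.bddBelow_range _) i

theorem IsHermitian.dotProduct_mulVec_le_maxEig_mul (hM : M.IsHermitian) (x : k → ℝ) :
    x ⬝ᵥ (M *ᵥ x) ≤ maxEig hM * (x ⬝ᵥ x) := by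
  refine dotProduct_algebraMap_mulVec (maxEig hM) x ▸ dotProduct_mulVec_le_of_le ?_ x
  rw [le_algebraMap_iff_spectrum_le (ha := hM.isSelfAdjoint),
    hM.spectrum_real_eq_range_eigenvalues]
  rintro _ ⟨i, rfl⟩
  exact le_ciSup (Finite.bddAbove_range _) i

theorem IsHermitian.minEig_le_diag (hM : M.IsHermitian) (i : k) : minEig hM ≤ M i i := by
  simpa using hM.minEig_mul_dotProduct_self_le (Pi.single i 1)

theorem IsHermitian.diag_le_maxEig (hM : M.IsHermitian) (i : k) : M i i ≤ maxEig hM := by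
  simpa using hM.dotProduct_mulVec_le_maxEig_mul (Pi.single i 1)

theorem IsHermitian.minEig_le_of_mulVec_eq_smul (hM : M.IsHermitian) {x : k → ℝ} {μ : ℝ}
    (hx : x ≠ 0) (hμ : M *ᵥ x = μ • x) : minEig hM ≤ μ := by
  have := hM.minEig_mul_dotProduct_self_le x
  rw [hμ, dotProduct_smul, smul_eq_mul] at this
  exact le_of_mul_le_mul_right this (dotProduct_self_pos hx)

theorem IsHermitian.exists_mulVec_eq_maxEig_smul [Nonempty k] (hM : M.IsHermitian) :
    ∃ v : k → ℝ, v ≠ 0 ∧ M *ᵥ v = maxEig hM • v := by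
  obtain ⟨j, hj⟩ := Finite.exists_max hM.eigenvalues
  have hmax : hM.eigenvalues j = maxEig hM :=
    le_antisymm (le_ciSup (Finite.bddAbove_range _) j) (ciSup_le hj)
  refine ⟨hM.eigenvectorBasis j, ?_, hmax ▸ hM.mulVec_eigenvectorBasis j⟩
  simpa using hM.eigenvectorBasis.orthonormal.ne_zero j

theorem IsHermitian.specRad_eq_maxEig [Nonempty k] (hM : M.IsHermitian)
    (h : ∀ (x : k → ℝ) (μ : ℝ), x ≠ 0 → M *ᵥ x = μ • x → -μ ≤ maxEig hM) :
    specRad hM = maxEig hM := by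
  refine le_antisymm (ciSup_le fun i => abs_le.mpr ⟨?_, le_ciSup (Finite.bddAbove_range _) i⟩)
    (ciSup_mono (Finite.bddAbove_range _) fun i => le_abs_self _)
  have := h _ _ (by simpa using hM.eigenvectorBasis.orthonormal.ne_zero i)
    (hM.mulVec_eigenvectorBasis i)
  linarith

end Rayleigh

section SaddlePoint

variable {m n : Type*} [Fintype m] [Fintype n]
  {A : Matrix m m ℝ} {B : Matrix m n ℝ} {C : Matrix n n ℝ}

theorem sumElim_dotProduct_fromBlocks_mulVec_sumElim (u : m → ℝ) (v : n → ℝ) :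
    Sum.elim u v ⬝ᵥ (fromBlocks A B Bᵀ C *ᵥ Sum.elim u v) =
      u ⬝ᵥ (A *ᵥ u) + 2 * (u ⬝ᵥ (B *ᵥ v)) + v ⬝ᵥ (C *ᵥ v) := by
  rw [fromBlocks_mulVec, sumElim_dotProduct_sumElim, Sum.elim_comp_inl, Sum.elim_comp_inr,
    dotProduct_add, dotProduct_add, dotProduct_transpose_mulVec]
  ring

theorem fromBlocks_mulVec_sumElim_eq_smul_iff {u : m → ℝ} {v : n → ℝ} {μ : ℝ} :
    fromBlocks A B Bᵀ C *ᵥ Sum.elim u v = μ • Sum.elim u v ↔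
      A *ᵥ u + B *ᵥ v = μ • u ∧ Bᵀ *ᵥ u + C *ᵥ v = μ • v := by
  have hsmul : μ • Sum.elim u v = Sum.elim (μ • u) (μ • v) := by ext (i | j) <;> rfl
  rw [fromBlocks_mulVec, Sum.elim_comp_inl, Sum.elim_comp_inr, hsmul, Sum.elim_eq_iff]

variable [DecidableEq m] [DecidableEq n]

theorem minEig_le_maxEig_fromBlocks_left [Nonempty m] {D : Matrix n m ℝ} (hA : A.IsHermitian)
    (hW : (fromBlocks A B D C).IsHermitian) : minEig hA ≤ maxEig hW :=
  let i := Classical.arbitrary m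
  (hA.minEig_le_diag i).trans (hW.diag_le_maxEig (Sum.inl i))

theorem minEig_le_maxEig_fromBlocks_right [Nonempty n] {D : Matrix n m ℝ} (hC : C.IsHermitian)
    (hW : (fromBlocks A B D C).IsHermitian) : minEig hC ≤ maxEig hW :=
  let j := Classical.arbitrary n
  (hC.minEig_le_diag j).trans (hW.diag_le_maxEig (Sum.inr j))

theorem minEig_add_minEig_sub_le_maxEig_fromBlocks (hA : A.IsHermitian) (hC : C.IsHermitian)
    (hW : (fromBlocks A B Bᵀ C).IsHermitian) {u : m → ℝ} {v : n → ℝ} {μ : ℝ}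
    (hu : u ≠ 0) (hv : v ≠ 0) (hAB : A *ᵥ u + B *ᵥ v = μ • u)
    (hBC : Bᵀ *ᵥ u + C *ᵥ v = μ • v) :
    minEig hA + minEig hC - μ ≤ maxEig hW := by
  have hp : 0 < u ⬝ᵥ u := dotProduct_self_pos hu
  have hq : 0 < v ⬝ᵥ v := dotProduct_self_pos hv
  have hu_eq : u ⬝ᵥ (A *ᵥ u) + u ⬝ᵥ (B *ᵥ v) = μ * (u ⬝ᵥ u) := by
    simpa [dotProduct_add, dotProduct_smul] using congrArg (u ⬝ᵥ ·) hAB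
  have hv_eq : u ⬝ᵥ (B *ᵥ v) + v ⬝ᵥ (C *ᵥ v) = μ * (v ⬝ᵥ v) := by
    simpa [dotProduct_add, dotProduct_smul, dotProduct_transpose_mulVec] using congrArg (v ⬝ᵥ ·) hBC
  have hAu := hA.minEig_mul_dotProduct_self_le u
  have hCv := hC.minEig_mul_dotProduct_self_le v
  have hWw := hW.dotProduct_mulVec_le_maxEig_mul (Sum.elim ((v ⬝ᵥ v) • u) (-(u ⬝ᵥ u) • v))
  rw [sumElim_dotProduct_fromBlocks_mulVec_sumElim, sumElim_dotProduct_sumElim] at hWw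
  simp only [mulVec_smul, dotProduct_smul, smul_dotProduct, smul_eq_mul] at hWw
  set p := u ⬝ᵥ u
  set q := v ⬝ᵥ v
  refine le_of_mul_le_mul_left ?_ (by positivity : 0 < p * q * (p + q))
  linear_combination hWw + (p * q) * hu_eq + (p * q) * hv_eq
    + mul_le_mul_of_nonneg_left hAu (by positivity : 0 ≤ q * (p + q))
    + mul_le_mul_of_nonneg_left hCv (by positivity : 0 ≤ p * (p + q))

theorem neg_le_maxEig_fromBlocks_of_mulVec_eq_smul [Nonempty m] [Nonempty n]
    (hA : A.IsHermitian) (hC : C.IsHermitian) (hW : (fromBlocks A B Bᵀ C).IsHermitian)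
    (h : 0 ≤ minEig hA + minEig hC) {x : m ⊕ n → ℝ} {μ : ℝ} (hx : x ≠ 0)
    (hμ : fromBlocks A B Bᵀ C *ᵥ x = μ • x) :
    -μ ≤ maxEig hW := by
  rw [← Sum.elim_comp_inl_inr x] at hx hμ
  obtain ⟨hAB, hBC⟩ := fromBlocks_mulVec_sumElim_eq_smul_iff.mp hμ
  have hleft := minEig_le_maxEig_fromBlocks_left hA hW
  have hright := minEig_le_maxEig_fromBlocks_right hC hW
  by_cases hu : x ∘ Sum.inl = 0
  · have hv : x ∘ Sum.inr ≠ 0 := fun hv => hx (by rw [hu, hv]; ext (i | j) <;> rfl)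
    have := hC.minEig_le_of_mulVec_eq_smul hv (by simpa [hu] using hBC)
    linarith
  by_cases hv : x ∘ Sum.inr = 0
  · have := hA.minEig_le_of_mulVec_eq_smul hu (by simpa [hv] using hAB)
    linarith
  linarith [minEig_add_minEig_sub_le_maxEig_fromBlocks hA hC hW hu hv hAB hBC]

end SaddlePoint

end Matrix

theorem stmt_6 (m n : ℕ) (hm : 0 < m) (hn : 0 < n)
    (A : Matrix (Fin m) (Fin m) ℝ) (B : Matrix (Fin m) (Fin n) ℝ)
    (C : Matrix (Fin n) (Fin n) ℝ)
    (hA : A.PosDef) (hC : C.NegSemidefinite)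
    (hW : (fromBlocks A B Bᵀ C).IsHermitian)
    (h : 0 ≤ minEig hA.isHermitian + minEig hC.1) :
    (∃ v : Fin m ⊕ Fin n → ℝ, v ≠ 0 ∧
        (fromBlocks A B Bᵀ C) *ᵥ v = specRad hW • v) ∧
    specRad hW = maxEig hW := by
  have : Nonempty (Fin m) := Fin.pos_iff_nonempty.mp hm
  have : Nonempty (Fin n) := Fin.pos_iff_nonempty.mp hn
  have hρ : specRad hW = maxEig hW := hW.specRad_eq_maxEig fun _ _ hx hμ =>
    neg_le_maxEig_fromBlocks_of_mulVec_eq_smul hA.isHermitian hC.1 hW h hx hμ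
  exact ⟨hρ ▸ hW.exists_mulVec_eq_maxEig_smul, hρ⟩
end

section
/- Let W be the real symmetric (m+n)×(m+n) block matrix W = [[A, B], [Bᵀ, O]], where A ∈ ℝ^{m×m} is symmetric positive definite, B ∈ ℝ^{m×n}, and O is the n×n zero matrix. Then W possesses the quasi-Perron-Frobenius property: ρ(W) = λ_max(W) and λ_max(W) ≠ −λ_min(W). -/
/-!
Write an eigenvector of `W = [[A, B], [Bᵀ, 0]]` as `(x, y)` with `‖(x, y)‖ = 1`, so that its
eigenvalue is `λ = xᵀAx + 2 xᵀBy`. The unit vector `(-x, y)` has Rayleigh quotient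
`xᵀAx - 2 xᵀBy ≤ λ_max`, hence `-λ ≤ λ_max - 2 xᵀAx`. If `x ≠ 0` this is `< λ_max` by
positive definiteness of `A`; if `x = 0` then `λ = 0`, while `λ_max > 0` because the
quadratic form of `W` at `(e, 0)` is `eᵀAe > 0`. So every eigenvalue satisfies `-λ < λ_max`, which gives both claims.
-/

open Matrix

section Spectrum

variable {k : Type*} [Fintype k] [DecidableEq k] {M : Matrix k k ℝ} (hM : M.IsHermitian)

lemma eigenvalues_le_maxEig (i : k) : hM.eigenvalues i ≤ maxEig hM :=
  le_ciSup (Set.finite_range _).bddAbove i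

lemma dotProduct_mulVec_le_maxEig_mul (x : k → ℝ) :
    x ⬝ᵥ (M *ᵥ x) ≤ maxEig hM * (x ⬝ᵥ x) := by
  set U : Matrix k k ℝ := ↑hM.eigenvectorUnitary
  set c := star U *ᵥ x
  have hform : x ⬝ᵥ (M *ᵥ x) = c ⬝ᵥ (diagonal hM.eigenvalues *ᵥ c) := by
    conv_lhs => rw [hM.spectral_theorem, Unitary.conjStarAlgAut_apply]
    rw [← mulVec_mulVec, ← mulVec_mulVec, dotProduct_mulVec, ← mulVec_transpose]
    rfl
  have hnorm : x ⬝ᵥ x = c ⬝ᵥ c := by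
    have hU : U * star U = 1 := mem_unitaryGroup_iff.mp hM.eigenvectorUnitary.2
    nth_rewrite 2 [show x = (U * star U) *ᵥ x by rw [hU, one_mulVec]]
    rw [← mulVec_mulVec, dotProduct_mulVec, ← mulVec_transpose]
    rfl
  rw [hform, hnorm, dotProduct, dotProduct, Finset.mul_sum]
  refine Finset.sum_le_sum fun i _ => ?_
  rw [mulVec_diagonal, mul_left_comm]
  exact mul_le_mul_of_nonneg_right (eigenvalues_le_maxEig hM i) (mul_self_nonneg _)

lemma eigenvalues_eq_dotProduct_mulVec (i : k) :
    hM.eigenvalues i = ⇑(hM.eigenvectorBasis i) ⬝ᵥ (M *ᵥ ⇑(hM.eigenvectorBasis i)) := by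
  simpa using hM.eigenvalues_eq i

lemma eigenvectorBasis_dotProduct_self (i : k) :
    ⇑(hM.eigenvectorBasis i) ⬝ᵥ ⇑(hM.eigenvectorBasis i) = 1 := by
  have h := hM.eigenvectorBasis.inner_eq_one i
  rw [EuclideanSpace.inner_eq_star_dotProduct] at h
  simpa using h

lemma specRad_eq_maxEig_of_forall_neg_le [Nonempty k] (h : ∀ i, -hM.eigenvalues i ≤ maxEig hM) :
    specRad hM = maxEig hM := by
  refine le_antisymm (ciSup_le fun i => abs_le.mpr ⟨by linarith [h i], ?_⟩)
    (ciSup_mono (Set.finite_range _).bddAbove fun i => le_abs_self _)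
  exact eigenvalues_le_maxEig hM i

lemma maxEig_ne_neg_minEig_of_forall_neg_lt [Nonempty k]
    (h : ∀ i, -hM.eigenvalues i < maxEig hM) : maxEig hM ≠ -minEig hM := by
  obtain ⟨i, hi⟩ : ∃ i, hM.eigenvalues i = minEig hM := exists_eq_ciInf_of_finite
  rw [← hi]
  exact (h i).ne'

end Spectrum

section BlockMatrix

variable {m n : Type*} [Fintype m] [Fintype n]

lemma sumElim_dotProduct_fromBlocks_mulVec {R : Type*} [CommSemiring R]
    (A : Matrix m m R) (B : Matrix m n R) (x : m → R) (y : n → R) :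
    Sum.elim x y ⬝ᵥ (fromBlocks A B Bᵀ 0 *ᵥ Sum.elim x y) =
      x ⬝ᵥ (A *ᵥ x) + 2 * (x ⬝ᵥ (B *ᵥ y)) := by
  have hsymm : y ⬝ᵥ (Bᵀ *ᵥ x) = x ⬝ᵥ (B *ᵥ y) := by
    rw [dotProduct_mulVec, vecMul_transpose, dotProduct_comm]
  rw [fromBlocks_mulVec, sumElim_dotProduct_sumElim]
  simp only [Sum.elim_comp_inl, Sum.elim_comp_inr, zero_mulVec, add_zero, dotProduct_add, hsymm]
  ring

variable [DecidableEq m] [DecidableEq n] {A : Matrix m m ℝ} {B : Matrix m n ℝ}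

lemma maxEig_fromBlocks_pos [Nonempty m] (hA : A.PosDef)
    (hW : (fromBlocks A B Bᵀ 0).IsHermitian) : 0 < maxEig hW := by
  obtain ⟨x, hx⟩ := exists_ne (0 : m → ℝ)
  have hpos : 0 < x ⬝ᵥ (A *ᵥ x) := by simpa using hA.dotProduct_mulVec_pos hx
  have hle := dotProduct_mulVec_le_maxEig_mul hW (Sum.elim x 0)
  rw [sumElim_dotProduct_fromBlocks_mulVec, sumElim_dotProduct_sumElim] at hle
  simp only [mulVec_zero, dotProduct_zero, mul_zero, add_zero] at hle
  exact pos_of_mul_pos_left (hpos.trans_le hle) (dotProduct_self_star_nonneg x)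

lemma neg_eigenvalues_lt_maxEig_fromBlocks [Nonempty m] (hA : A.PosDef)
    (hW : (fromBlocks A B Bᵀ 0).IsHermitian) (i : m ⊕ n) :
    -hW.eigenvalues i < maxEig hW := by
  set v := ⇑(hW.eigenvectorBasis i)
  set x : m → ℝ := v ∘ Sum.inl
  set y : n → ℝ := v ∘ Sum.inr
  have hv : v = Sum.elim x y := (Sum.elim_comp_inl_inr v).symm
  have heig : hW.eigenvalues i = x ⬝ᵥ (A *ᵥ x) + 2 * (x ⬝ᵥ (B *ᵥ y)) := by
    rw [eigenvalues_eq_dotProduct_mulVec, ← sumElim_dotProduct_fromBlocks_mulVec, ← hv]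
  have hflip : x ⬝ᵥ (A *ᵥ x) - 2 * (x ⬝ᵥ (B *ᵥ y)) ≤ maxEig hW := by
    have hunit : Sum.elim (-x) y ⬝ᵥ Sum.elim (-x) y = 1 := by
      rw [sumElim_dotProduct_sumElim, neg_dotProduct_neg, ← sumElim_dotProduct_sumElim, ← hv,
        eigenvectorBasis_dotProduct_self]
    have hle := dotProduct_mulVec_le_maxEig_mul hW (Sum.elim (-x) y)
    rw [hunit, mul_one, sumElim_dotProduct_fromBlocks_mulVec, mulVec_neg, neg_dotProduct_neg,
      neg_dotProduct] at hle
    linarith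
  rcases eq_or_ne x 0 with hx | hx
  · simpa [heig, hx] using maxEig_fromBlocks_pos hA hW
  · have hpos : 0 < x ⬝ᵥ (A *ᵥ x) := by simpa using hA.dotProduct_mulVec_pos hx
    linarith

end BlockMatrix

theorem stmt_8_general (m n : ℕ) (hm : 0 < m)
    (A : Matrix (Fin m) (Fin m) ℝ) (B : Matrix (Fin m) (Fin n) ℝ)
    (hA : A.PosDef)
    (hW : (fromBlocks A B Bᵀ (0 : Matrix (Fin n) (Fin n) ℝ)).IsHermitian) :
    specRad hW = maxEig hW ∧ maxEig hW ≠ -minEig hW := by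
  have : NeZero m := ⟨hm.ne'⟩
  have key := neg_eigenvalues_lt_maxEig_fromBlocks hA hW
  exact ⟨specRad_eq_maxEig_of_forall_neg_le hW fun i => (key i).le,
    maxEig_ne_neg_minEig_of_forall_neg_lt hW key⟩

theorem stmt_8 (m n : ℕ) (hm : 0 < m) (hn : 0 < n)
    (A : Matrix (Fin m) (Fin m) ℝ) (B : Matrix (Fin m) (Fin n) ℝ)
    (hA : A.PosDef)
    (hW : (fromBlocks A B Bᵀ (0 : Matrix (Fin n) (Fin n) ℝ)).IsHermitian) :
    specRad hW = maxEig hW ∧ maxEig hW ≠ -minEig hW :=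
  stmt_8_general m n hm A B hA hW
end

section
/- (Perron–Frobenius) Let M ∈ ℝ^{n×n} be a matrix all of whose entries are nonnegative. Then the spectral radius ρ(M) is an eigenvalue of M, and M has a nonzero eigenvector with all entries nonnegative corresponding to the eigenvalue ρ(M). -/
open Matrix

/-- The spectral radius of a real square matrix: the supremum of the absolute values of
its complex eigenvalues (the spectrum of the matrix viewed over `ℂ`). -/
noncomputable def specRadC {n : ℕ} (M : Matrix (Fin n) (Fin n) ℝ) : ℝ :=
  sSup ((fun z : ℂ => ‖z‖) '' spectrum ℂ (M.map Complex.ofReal))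

/-!
Let `μ` be an eigenvalue with `‖μ‖ = ρ(M)` and `v` an eigenvector. By the triangle inequality the
vector `|v|` satisfies `ρ • |v| ≤ M |v|`. For a positive matrix `B`, maximising `r` over the compact
set of pairs `(r, x)` with `x` in the standard simplex and `r • x ≤ B x` produces an eigenvector:
if `B x ≠ r • x`, then `B (B x - r • x)` is strictly positive and `B x` improves `r`. Applying this
to `M + ε J` (`J` the all-ones matrix) and letting `ε → 0` by compactness gives a nonnegative
eigenvector of `M` with eigenvalue `r ≥ ρ`; since `r` is itself an eigenvalue, `r = ρ`.
-/

open Set Filter Topology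

section

variable {ι : Type*} [Fintype ι]

theorem pos_of_mem_stdSimplex {x : ι → ℝ} (hx : x ∈ stdSimplex ℝ ι) : 0 < x :=
  lt_of_le_of_ne hx.1 fun h => by simpa [← h] using hx.2

theorem exists_pos_forall_mul_le {a b : ι → ℝ} (hb : ∀ i, 0 < b i) :
    ∃ δ > 0, ∀ i, δ * a i ≤ b i := by
  have : ∀ᶠ δ in 𝓝[>] (0 : ℝ), 0 < δ ∧ ∀ i, δ * a i ≤ b i :=
    eventually_mem_nhdsWithin.and <| nhdsWithin_le_nhds <| eventually_all.2 fun i =>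
      ((continuous_mul_const (a i)).continuousAt.eventually_lt continuousAt_const
        (by simpa using hb i)).mono fun _ => le_of_lt
  exact this.exists

namespace Matrix

theorem mem_spectrum_iff_exists_mulVec_eq_smul {K : Type*} [Field K] [DecidableEq ι]
    (A : Matrix ι ι K) (μ : K) : μ ∈ spectrum K A ↔ ∃ v ≠ 0, A *ᵥ v = μ • v := by
  simp only [← spectrum_toLin', ← Module.End.hasEigenvalue_iff_mem_spectrum,
    Module.End.hasEigenvalue_iff, Submodule.ne_bot_iff, Module.End.mem_eigenspace_iff,
    toLin'_apply]
  exact exists_congr fun v => and_comm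

theorem map_mem_spectrum_map {K L : Type*} [Field K] [Field L] [DecidableEq ι] (f : K →+* L)
    {A : Matrix ι ι K} {μ : K} (h : μ ∈ spectrum K A) : f μ ∈ spectrum L (A.map f) := by
  rw [mem_spectrum_iff_isRoot_charpoly] at h ⊢
  rw [charpoly_map]
  exact Polynomial.IsRoot.map h

theorem norm_smul_le_mulVec_norm {M : Matrix ι ι ℝ} (hM : ∀ i j, 0 ≤ M i j) {μ : ℂ}
    {v : ι → ℂ} (hv : M.map Complex.ofReal *ᵥ v = μ • v) :
    ‖μ‖ • (fun i => ‖v i‖) ≤ M *ᵥ fun i => ‖v i‖ := fun i =>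
  calc ‖μ‖ * ‖v i‖ = ‖∑ j, (M i j : ℂ) * v j‖ := by
        rw [← norm_mul, ← smul_eq_mul, ← Pi.smul_apply μ v, ← hv]; rfl
    _ ≤ ∑ j, ‖(M i j : ℂ) * v j‖ := norm_sum_le _ _
    _ = ∑ j, M i j * ‖v j‖ := by simp [abs_of_nonneg (hM i _)]

theorem mulVec_pos_of_pos {B : Matrix ι ι ℝ} (hB : ∀ i j, 0 < B i j) {x : ι → ℝ} (hx : 0 < x)
    (i : ι) : 0 < (B *ᵥ x) i := by
  obtain ⟨hx0, j, hj⟩ := Pi.lt_def.1 hx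
  exact Finset.sum_pos' (fun k _ => mul_nonneg (hB i k).le (hx0 k))
    ⟨j, Finset.mem_univ j, mul_pos (hB i j) hj⟩

theorem mulVec_le_mulVec_of_le {B B' : Matrix ι ι ℝ} (h : ∀ i j, B i j ≤ B' i j) {x : ι → ℝ}
    (hx : 0 ≤ x) : B *ᵥ x ≤ B' *ᵥ x := fun i =>
  dotProduct_le_dotProduct_of_nonneg_right (h i) hx

theorem exists_mem_stdSimplex_smul_le_mulVec {B : Matrix ι ι ℝ} {r : ℝ} {y : ι → ℝ} (hy : 0 < y)
    (h : r • y ≤ B *ᵥ y) : ∃ x ∈ stdSimplex ℝ ι, r • x ≤ B *ᵥ x := by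
  have hs : 0 < ∑ i, y i := Fintype.sum_pos hy
  refine ⟨(∑ i, y i)⁻¹ • y, ⟨fun i => ?_, ?_⟩, ?_⟩
  · exact mul_nonneg (inv_nonneg.2 hs.le) (hy.le i)
  · simp only [Pi.smul_apply, smul_eq_mul, ← Finset.mul_sum, inv_mul_cancel₀ hs.ne']
  · rw [smul_comm, mulVec_smul]
    exact smul_le_smul_of_nonneg_left h (inv_nonneg.2 hs.le)

theorem le_sum_sum_of_smul_le_mulVec {B : Matrix ι ι ℝ} (hB : ∀ i j, 0 ≤ B i j) {r : ℝ}
    {x : ι → ℝ} (hx : x ∈ stdSimplex ℝ ι) (h : r • x ≤ B *ᵥ x) : r ≤ ∑ i, ∑ j, B i j :=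
  calc r = ∑ i, r * x i := by rw [← Finset.mul_sum, hx.2, mul_one]
    _ ≤ ∑ i, (B *ᵥ x) i := Finset.sum_le_sum fun i _ => h i
    _ ≤ ∑ i, ∑ j, B i j := Finset.sum_le_sum fun i _ => Finset.sum_le_sum fun j _ =>
        mul_le_of_le_one_right (hB i j) (mem_Icc_of_mem_stdSimplex hx j).2

def subinvariantPairs (B : Matrix ι ι ℝ) (r₀ : ℝ) : Set (ℝ × (ι → ℝ)) :=
  {p | r₀ ≤ p.1 ∧ p.2 ∈ stdSimplex ℝ ι ∧ p.1 • p.2 ≤ B *ᵥ p.2}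

theorem isCompact_subinvariantPairs {B : Matrix ι ι ℝ} (hB : ∀ i j, 0 ≤ B i j) (r₀ : ℝ) :
    IsCompact (subinvariantPairs B r₀) := by
  refine (isCompact_Icc.prod (isCompact_stdSimplex ℝ ι)).of_isClosed_subset ?_
    fun p ⟨hr, hx, h⟩ => ⟨⟨hr, le_sum_sum_of_smul_le_mulVec hB hx h⟩, hx⟩
  exact (isClosed_le continuous_const continuous_fst).inter <|
    ((isClosed_stdSimplex ℝ ι).preimage continuous_snd).inter <|
    isClosed_le (continuous_fst.smul continuous_snd) (continuous_const.matrix_mulVec continuous_snd)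

theorem exists_lt_smul_mulVec_le_of_pos {B : Matrix ι ι ℝ} (hB : ∀ i j, 0 < B i j) {r : ℝ}
    {x : ι → ℝ} (h : r • x ≤ B *ᵥ x) (hne : B *ᵥ x ≠ r • x) :
    ∃ r' > r, r' • (B *ᵥ x) ≤ B *ᵥ (B *ᵥ x) := by
  set w := B *ᵥ x - r • x with hw
  have hBw := mulVec_pos_of_pos hB (lt_of_le_of_ne (sub_nonneg.2 h) (sub_ne_zero.2 hne).symm)
  obtain ⟨δ, hδ, hδw⟩ := exists_pos_forall_mul_le (a := B *ᵥ x) hBw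
  have hBBx : B *ᵥ (B *ᵥ x) = r • (B *ᵥ x) + B *ᵥ w := by
    rw [hw, mulVec_sub, mulVec_smul]; abel
  refine ⟨r + δ, lt_add_of_pos_right r hδ, fun i => ?_⟩
  rw [hBBx]
  simpa [add_mul] using hδw i

theorem exists_eigenpair_ge_of_pos {B : Matrix ι ι ℝ} (hB : ∀ i j, 0 < B i j) {r₀ : ℝ}
    {x₀ : ι → ℝ} (hx₀ : x₀ ∈ stdSimplex ℝ ι) (h₀ : r₀ • x₀ ≤ B *ᵥ x₀) :
    ∃ r ≥ r₀, ∃ x ∈ stdSimplex ℝ ι, B *ᵥ x = r • x := by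
  obtain ⟨⟨r, x⟩, ⟨hr, hx, hrx⟩, hmax⟩ :=
    (isCompact_subinvariantPairs (fun i j => (hB i j).le) r₀).exists_isMaxOn
      ⟨(r₀, x₀), le_rfl, hx₀, h₀⟩ continuous_fst.continuousOn
  refine ⟨r, hr, x, hx, by_contra fun hne => ?_⟩
  obtain ⟨r', hr', h'⟩ := exists_lt_smul_mulVec_le_of_pos hB hrx hne
  have hBx : 0 < B *ᵥ x := by
    have := mulVec_pos_of_pos hB (pos_of_mem_stdSimplex hx)
    obtain ⟨-, j, -⟩ := Pi.lt_def.1 (pos_of_mem_stdSimplex hx)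
    exact Pi.lt_def.2 ⟨fun i => (this i).le, j, this j⟩
  obtain ⟨y, hy, hy'⟩ := exists_mem_stdSimplex_smul_le_mulVec hBx h'
  exact (isMaxOn_iff.1 hmax (r', y) ⟨hr.trans hr'.le, hy, hy'⟩).not_gt hr'

theorem exists_eigenpair_ge_of_nonneg {M : Matrix ι ι ℝ} (hM : ∀ i j, 0 ≤ M i j) {r₀ : ℝ}
    {x₀ : ι → ℝ} (hx₀ : x₀ ∈ stdSimplex ℝ ι) (h₀ : r₀ • x₀ ≤ M *ᵥ x₀) :
    ∃ r ≥ r₀, ∃ x ∈ stdSimplex ℝ ι, M *ᵥ x = r • x := by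
  set J : Matrix ι ι ℝ := of fun _ _ => 1
  set Z : Set (ℝ × ℝ × (ι → ℝ)) := (Icc 0 1 ×ˢ subinvariantPairs (M + J) r₀) ∩
    {p | (M + p.1 • J) *ᵥ p.2.2 = p.2.1 • p.2.2}
  have hZ : IsCompact Z := by
    refine (isCompact_Icc.prod (isCompact_subinvariantPairs (fun i j => ?_) r₀)).inter_right
      (isClosed_eq (by fun_prop) (by fun_prop))
    simpa [J] using add_nonneg (hM i j) zero_le_one
  have hZε : ∀ ε ∈ Ioc (0 : ℝ) 1, ∃ p ∈ Z, p.1 = ε := by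
    rintro ε ⟨hε, hε1⟩
    have hMε : ∀ i j, M i j ≤ (M + ε • J) i j := fun i j => by simp [J, hε.le]
    obtain ⟨r, hr, x, hx, hMx⟩ := exists_eigenpair_ge_of_pos
      (fun i j => by simpa [J] using add_pos_of_nonneg_of_pos (hM i j) hε) hx₀
      (h₀.trans (mulVec_le_mulVec_of_le hMε hx₀.1))
    refine ⟨(ε, r, x), ⟨⟨⟨hε.le, hε1⟩, hr, hx, ?_⟩, hMx⟩, rfl⟩
    exact hMx.symm.le.trans (mulVec_le_mulVec_of_le (fun i j => by simp [J, hε1]) hx.1)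
  obtain ⟨p, hpZ, -⟩ := hZε 1 ⟨one_pos, le_rfl⟩
  obtain ⟨⟨ε, r, x⟩, ⟨⟨⟨hε, hε1⟩, hr, hx, -⟩, hMx⟩, hmin⟩ :=
    hZ.exists_isMinOn ⟨p, hpZ⟩ continuous_fst.continuousOn
  -- `ε / 2` would also admit an eigenpair, so the least `ε` that admits one is `0`.
  obtain rfl : ε = 0 := by
    refine le_antisymm (by_contra fun hε' => ?_) hε
    obtain ⟨q, hq, hqε⟩ := hZε (ε / 2) ⟨by linarith, by linarith⟩
    have : ε ≤ q.1 := isMinOn_iff.1 hmin q hq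
    linarith
  exact ⟨r, hr, x, hx, by simpa using hMx⟩

end Matrix

end

theorem norm_le_specRadC {n : ℕ} {M : Matrix (Fin n) (Fin n) ℝ} {μ : ℂ}
    (hμ : μ ∈ spectrum ℂ (M.map Complex.ofReal)) : ‖μ‖ ≤ specRadC M :=
  le_csSup ((finite_spectrum _).image _).bddAbove ⟨μ, hμ, rfl⟩

theorem exists_mem_spectrum_norm_eq_specRadC {n : ℕ} (hn : 0 < n) (M : Matrix (Fin n) (Fin n) ℝ) :
    ∃ μ ∈ spectrum ℂ (M.map Complex.ofReal), ‖μ‖ = specRadC M :=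
  have : Nonempty (Fin n) := Fin.pos_iff_nonempty.1 hn
  (spectrum.nonempty_of_isAlgClosed_of_finiteDimensional ℂ _).image _ |>.csSup_mem
    ((finite_spectrum _).image _)

theorem stmt_15 (n : ℕ) (hn : 0 < n) (M : Matrix (Fin n) (Fin n) ℝ)
    (hM : ∀ i j, 0 ≤ M i j) :
    ((specRadC M : ℝ) : ℂ) ∈ spectrum ℂ (M.map Complex.ofReal) ∧
    ∃ x : Fin n → ℝ, x ≠ 0 ∧ (∀ i, 0 ≤ x i) ∧ M *ᵥ x = specRadC M • x := by
  obtain ⟨μ, hμ, hμρ⟩ := exists_mem_spectrum_norm_eq_specRadC hn M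
  obtain ⟨v, hv0, hv⟩ := (mem_spectrum_iff_exists_mulVec_eq_smul _ _).1 hμ
  have hsub := norm_smul_le_mulVec_norm hM hv
  rw [hμρ] at hsub
  have hv_pos : 0 < fun i => ‖v i‖ := lt_of_le_of_ne (fun i => norm_nonneg _) fun h =>
    hv0 (funext fun i => norm_eq_zero.1 (congrFun h i).symm)
  obtain ⟨x₀, hx₀, h₀⟩ := exists_mem_stdSimplex_smul_le_mulVec hv_pos hsub
  obtain ⟨r, hρr, x, hx, hMx⟩ := exists_eigenpair_ge_of_nonneg hM hx₀ h₀
  have hx0 : x ≠ 0 := (pos_of_mem_stdSimplex hx).ne'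
  have hr : (r : ℂ) ∈ spectrum ℂ (M.map Complex.ofReal) := map_mem_spectrum_map Complex.ofRealHom
    ((mem_spectrum_iff_exists_mulVec_eq_smul _ _).2 ⟨x, hx0, hMx⟩)
  obtain rfl : r = specRadC M :=
    le_antisymm ((le_abs_self r).trans (by simpa using norm_le_specRadC hr)) hρr
  exact ⟨hr, x, hx0, hx.1, hMx⟩
end
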